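/- If 1 → F → G → ℤ → 1 is a short exact sequence of groups with F a finitely generated free group, then G is residually finite. -/

import Mathlib

/-!
Put `N = ker q ≅ F`. A free group is residually finite: a word for `w ≠ 1` is detected by
the action of `F` on the finite set of its suffixes, each generator `a` acting by a permutation
that extends left multiplication by `a` where the latter stays inside the set.

As `N` is finitely generated, it has only finitely many homomorphisms to a given finite group,
so the intersection of their kernels is a characteristic subgroup `K` of finite index avoiding a
given element; being characteristic in the normal subgroup `N`, it is normal in `G`. Now `G ⧸ K`
maps onto `ℤ` with finite kernel `N ⧸ K`, and for a lift `t` of `1 ∈ ℤ`, every coset of `⟨t ^ d⟩`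
contains some `k * t ^ r` with `k ∈ N ⧸ K` and `0 ≤ r < d`, so `⟨t ^ d⟩` has finite index; it
misses every element `g ≠ 1` with `|q g| < d`.
-/

def IsResiduallyFinite (G : Type*) [Group G] : Prop :=
  ∀ g : G, g ≠ 1 → ∃ N : Subgroup G, N.Normal ∧ N.FiniteIndex ∧ g ∉ N

open Subgroup

section PartialMulLeft

variable {G : Type*} [Group G]

open Classical in
noncomputable def partialMulLeftPerm (S : Finset G) (g : G) : Equiv.Perm S :=
  Equiv.extendSubtype (p := fun u : S => g * u ∈ S) (q := fun v : S => g⁻¹ * v ∈ S)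
    { toFun := fun u => ⟨⟨g * u, u.2⟩, by simp [u.1.2]⟩
      invFun := fun v => ⟨⟨g⁻¹ * v, v.2⟩, by simp [v.1.2]⟩
      left_inv := fun u => by simp
      right_inv := fun v => by simp }

theorem partialMulLeftPerm_apply {S : Finset G} {g : G} {u : S} (hu : g * u ∈ S) :
    (partialMulLeftPerm S g u : G) = g * u := by
  classical
  rw [partialMulLeftPerm, Equiv.extendSubtype_apply_of_mem _ u hu]
  rfl

end PartialMulLeft

namespace FreeGroup

variable {α : Type*}

theorem lift_partialMulLeftPerm_mk {S : Finset (FreeGroup α)} :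
    ∀ {l : List (α × Bool)} (hS : ∀ s, s <:+ l → mk s ∈ S),
      (lift (fun a => partialMulLeftPerm S (of a)) (mk l) ⟨1, one_eq_mk ▸ hS [] List.nil_suffix⟩ :
        FreeGroup α) = mk l
  | [], _ => rfl
  | (a, b) :: l, hS => by
    have ih := lift_partialMulLeftPerm_mk fun s hs => hS s (hs.trans (List.suffix_cons _ l))
    have hmk : mk ((a, b) :: l) = mk [(a, b)] * mk l := by rw [mul_mk]; rfl
    have hmem : mk [(a, b)] * mk l ∈ S := hmk ▸ hS _ (List.suffix_refl _)
    rw [hmk, _root_.map_mul, Equiv.Perm.mul_apply]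
    generalize lift (fun a => partialMulLeftPerm S (of a)) (mk l) ⟨1, _⟩ = u at ih ⊢
    rw [← ih] at hmem ⊢
    cases b with
    | true =>
      rw [show mk [(a, true)] = of a from rfl] at hmem ⊢
      rw [lift_apply_of, partialMulLeftPerm_apply hmem]
    | false =>
      rw [show mk [(a, false)] = (of a)⁻¹ from rfl] at hmem ⊢
      have hσ : partialMulLeftPerm S (of a) ⟨_, hmem⟩ = u := Subtype.ext <| by
        rw [partialMulLeftPerm_apply (by simp [u.2]), mul_inv_cancel_left]
      rw [_root_.map_inv, lift_apply_of, Equiv.Perm.inv_eq_iff_eq.mpr hσ.symm]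

instance residuallyFinite : Group.ResiduallyFinite (FreeGroup α) := by
  classical
  refine Group.residuallyFinite_of_forall_exists_finite_monoidHom fun w hw => ?_
  let S : Finset (FreeGroup α) := (w.toWord.tails.map mk).toFinset
  have hS : ∀ s, s <:+ w.toWord → mk s ∈ S := fun s hs =>
    List.mem_toFinset.mpr (List.mem_map_of_mem ((List.mem_tails s _).mpr hs))
  refine ⟨Equiv.Perm S, inferInstance, inferInstance,
    lift fun a => partialMulLeftPerm S (of a), fun h => hw ?_⟩
  have := lift_partialMulLeftPerm_mk hS
  rwa [mk_toWord, h, Equiv.Perm.one_apply, eq_comm] at this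

end FreeGroup

namespace Group

variable {G H : Type*} [Group G] [Group H]

theorem ResiduallyFinite.isResiduallyFinite [ResiduallyFinite G] : IsResiduallyFinite G :=
  fun g hg =>
    let ⟨K, hK⟩ := exists_finiteIndexNormalSubgroup_notMem g hg
    ⟨K, inferInstance, inferInstance, hK⟩

theorem exists_finiteIndexNormalSubgroup_notMem_of_map_ne_one [ResiduallyFinite H]
    (f : G →* H) {g : G} (hg : f g ≠ 1) : ∃ K : FiniteIndexNormalSubgroup G, g ∉ K :=
  let ⟨K, hK⟩ := exists_finiteIndexNormalSubgroup_notMem (f g) hg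
  ⟨K.comap f, hK⟩

theorem ResiduallyFinite.of_injective [ResiduallyFinite H] (f : G →* H)
    (hf : Function.Injective f) : ResiduallyFinite G :=
  residuallyFinite_iff_exists_finiteIndexNormalSubgroup.mpr fun _ hg =>
    exists_finiteIndexNormalSubgroup_notMem_of_map_ne_one f ((map_ne_one_iff f hf).mpr hg)

instance finite_monoidHom_of_fg [FG G] [Finite H] : Finite (G →* H) := by
  obtain ⟨α, _, φ, hφ⟩ := fg_iff_exists_freeGroup_hom_surjective_finite.mp ‹FG G›
  have : Finite (FreeGroup α →* H) := Finite.of_equiv _ FreeGroup.lift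
  exact Finite.of_injective (fun f => f.comp φ) fun _ _ h => (MonoidHom.cancel_right hφ).mp h

theorem exists_characteristic_finiteIndex_notMem [FG G] [ResiduallyFinite G] {g : G}
    (hg : g ≠ 1) : ∃ K : Subgroup G, K.Characteristic ∧ K.FiniteIndex ∧ g ∉ K := by
  obtain ⟨N, hgN⟩ := exists_finiteIndexNormalSubgroup_notMem g hg
  refine ⟨⨅ f : G →* G ⧸ N.toSubgroup, f.ker, ?_, finiteIndex_iInf fun f => finiteIndex_ker f, ?_⟩
  · refine characteristic_iff_le_comap.mpr fun φ k hk => mem_iInf.mpr fun f => ?_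
    exact mem_iInf.mp hk (f.comp φ.toMonoidHom)
  · exact fun h => hgN ((QuotientGroup.eq_one_iff g).mp (mem_iInf.mp h (QuotientGroup.mk' _)))

end Group

section ExtensionByInt

variable {G : Type*} [Group G]

theorem finiteIndex_zpowers_pow_of_finite_ker (q : G →* Multiplicative ℤ) [Finite q.ker]
    {t : G} (ht : q t = .ofAdd 1) {d : ℕ} (hd : d ≠ 0) : (zpowers (t ^ d)).FiniteIndex := by
  suffices Function.Surjective
      fun p : q.ker × Fin d => ((p.1 * t ^ (p.2 : ℕ) : G) : G ⧸ zpowers (t ^ d)) by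
    have := Finite.of_surjective _ this
    exact finiteIndex_of_finite_quotient
  intro x
  obtain ⟨g, rfl⟩ := QuotientGroup.mk_surjective x
  set z := (q g).toAdd
  have hk : g * t ^ (-z) ∈ q.ker := by simp [ht, ← ofAdd_zsmul, z]
  have hr : 0 ≤ z % d := Int.emod_nonneg z (by omega)
  have hrd : z % d < d := Int.emod_lt_of_pos z (by omega)
  refine ⟨(⟨_, hk⟩, ⟨(z % d).toNat, by omega⟩), QuotientGroup.eq.mpr ⟨z / d, ?_⟩⟩
  have hz : ((z % d).toNat : ℤ) = z - d * (z / d) := by rw [Int.toNat_of_nonneg hr, Int.emod_def]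
  dsimp only
  rw [← zpow_natCast t (z % d).toNat, hz, ← zpow_natCast, ← zpow_mul]
  group

theorem residuallyFinite_of_finite_ker (q : G →* Multiplicative ℤ) (hq : Function.Surjective q)
    [Finite q.ker] : Group.ResiduallyFinite G := by
  obtain ⟨t, ht⟩ := hq (.ofAdd 1)
  refine Group.residuallyFinite_iff_exists_finiteIndex.mpr fun g hg => ?_
  obtain ⟨d, hd⟩ : ∃ d : ℕ, d = (q g).toAdd.natAbs + 1 := ⟨_, rfl⟩
  refine ⟨zpowers (t ^ d), finiteIndex_zpowers_pow_of_finite_ker q ht (by omega),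
    fun hgt => hg ?_⟩
  obtain ⟨j, hj⟩ := mem_zpowers_iff.mp hgt
  have hqg : (q ((t ^ d) ^ j)).toAdd = j * d := by simp [ht]
  rw [hj] at hqg
  obtain rfl : j = 0 := by
    have := congrArg Int.natAbs hqg
    rw [Int.natAbs_mul, Int.natAbs_natCast] at this
    by_contra hj0
    nlinarith [Int.natAbs_pos.mpr hj0]
  rw [← hj, zpow_zero]

theorem finite_map_mk'_map_subtype {N : Subgroup G} (K : Subgroup N) [(K.map N.subtype).Normal]
    [K.FiniteIndex] : Finite (N.map (QuotientGroup.mk' (K.map N.subtype))) := by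
  set f := (QuotientGroup.mk' (K.map N.subtype)).comp N.subtype
  have hker : f.ker = K := by
    rw [← MonoidHom.comap_ker, QuotientGroup.ker_mk',
      comap_map_eq_self_of_injective N.subtype_injective]
  have hrange : N.map (QuotientGroup.mk' (K.map N.subtype)) = f.range := by
    rw [← MonoidHom.map_range, range_subtype]
  rw [hrange]
  refine Nat.finite_of_card_ne_zero ?_
  rw [← index_ker, hker]
  exact FiniteIndex.index_ne_zero

theorem residuallyFinite_of_residuallyFinite_ker (q : G →* Multiplicative ℤ)
    (hq : Function.Surjective q) [Group.FG q.ker] [Group.ResiduallyFinite q.ker] :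
    Group.ResiduallyFinite G := by
  refine Group.residuallyFinite_iff_exists_finiteIndexNormalSubgroup.mpr fun g hg => ?_
  obtain ⟨K, hK, hKfi, hgK⟩ : ∃ K : Subgroup q.ker, K.Characteristic ∧ K.FiniteIndex ∧
      g ∉ K.map q.ker.subtype := by
    by_cases hgq : g ∈ q.ker
    · obtain ⟨K, hK, hKfi, hgK⟩ :=
        Group.exists_characteristic_finiteIndex_notMem (g := (⟨g, hgq⟩ : q.ker)) (by simpa using hg)
      exact ⟨K, hK, hKfi, by rintro ⟨x, hx, rfl⟩; exact hgK hx⟩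
    · exact ⟨⊤, inferInstance, inferInstance, by simpa using hgq⟩
  set L := K.map q.ker.subtype
  have hLq : L ≤ q.ker := map_subtype_le K
  have : Finite (QuotientGroup.lift L q hLq).ker := by
    rw [QuotientGroup.ker_lift]
    exact finite_map_mk'_map_subtype K
  have := residuallyFinite_of_finite_ker _ (QuotientGroup.lift_surjective_of_surjective L q hq hLq)
  exact Group.exists_finiteIndexNormalSubgroup_notMem_of_map_ne_one (QuotientGroup.mk' L)
    (by rwa [ne_eq, QuotientGroup.mk'_apply, QuotientGroup.eq_one_iff])

end ExtensionByInt

/-- if `1 → F → G → ℤ → 1` is a short exact sequence of groups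
with `F` a finitely generated free group (here `F = FreeGroup (Fin n)`), then
`G` is residually finite. -/
theorem stmt11 (n : ℕ) (G : Type*) [Group G]
    (ι : FreeGroup (Fin n) →* G) (hι : Function.Injective ι)
    (q : G →* Multiplicative ℤ) (hq : Function.Surjective q)
    (hexact : q.ker = ι.range) :
    IsResiduallyFinite G := by
  let e : FreeGroup (Fin n) ≃* q.ker :=
    (MonoidHom.ofInjective hι).trans (MulEquiv.subgroupCongr hexact.symm)
  have : Group.FG q.ker := Group.fg_of_surjective (f := e.toMonoidHom) e.surjective
  have : Group.ResiduallyFinite q.ker := .of_injective e.symm.toMonoidHom e.symm.injective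
  exact (residuallyFinite_of_residuallyFinite_ker q hq).isResiduallyFinite
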